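/- Define φ on the six edges (each parametrized by t ∈ [0,1]) of the one-skeleton of the regular spherical tetrahedron (edge length l = arccos(-1/3), arclength parameter s = lt) by φ^1(t)=φ^2(t)=φ^3(t)=sin(lt) and φ^4(t)=φ^5(t)=φ^6(t)= (sin l / (2 sin(l/2))) · sin(l/2 - lt). Then each φ^i satisfies (1/l^2)(φ^i)'' + φ^i = 0 (i.e., it is in the kernel of the stability operator on each edge), and φ satisfies the junction conditions: φ^1(0)+φ^2(0)+φ^3(0)=0, φ^1(1)-φ^5(0)+φ^6(1)=0, φ^2(1)-φ^6(0)+φ^4(1)=0, φ^3(1)-φ^4(0)+φ^5(1)=0, together with the derivative matching conditions (φ^1)'(0)=(φ^2)'(0)=(φ^3)'(0), (φ^1)'(1)=(φ^5)'(0)=(φ^6)'(1), (φ^2)'(1)=(φ^6)'(0)=(φ^4)'(1), (φ^3)'(1)=(φ^4)'(0)=(φ^5)'(1). -/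

import Mathlib

lemma aux_hd_sin (l t : ℝ) :
    HasDerivAt (fun t => Real.sin (l * t)) (Real.cos (l * t) * l) t := by
  exact ((Real.hasDerivAt_sin (l * t)).comp t ((hasDerivAt_id t).const_mul l)).congr_deriv (by ring)

lemma aux_hd_cos (l t : ℝ) :
    HasDerivAt (fun t => Real.cos (l * t) * l) (-Real.sin (l * t) * l * l) t := by
  simpa [mul_comm, mul_assoc, mul_left_comm] using
    (((Real.hasDerivAt_cos (l * t)).comp t ((hasDerivAt_id t).const_mul l)).mul_const l)

lemma aux_hd_sin2 (c l t : ℝ) :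
    HasDerivAt (fun t => c * Real.sin (l / 2 - l * t))
      (c * (Real.cos (l / 2 - l * t) * (-l))) t := by
  have h : HasDerivAt (fun t : ℝ => l / 2 - l * t) (-l) t := by
    simpa using ((hasDerivAt_id t).const_mul l).const_sub (l / 2)
  simpa [mul_assoc] using (((Real.hasDerivAt_sin (l / 2 - l * t)).comp t h).const_mul c)

lemma aux_hd_cos2 (c l t : ℝ) :
    HasDerivAt (fun t => c * (Real.cos (l / 2 - l * t) * (-l)))
      (c * (-Real.sin (l / 2 - l * t) * (-l) * (-l))) t := by
  have h : HasDerivAt (fun t : ℝ => l / 2 - l * t) (-l) t := by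
    simpa using ((hasDerivAt_id t).const_mul l).const_sub (l / 2)
  have := (((Real.hasDerivAt_cos (l / 2 - l * t)).comp t h).mul_const (-l)).const_mul c
  exact this

/-- The explicit eigenfunction with eigenvalue 0 on the one-skeleton of the
regular spherical tetrahedron (edge length l = arccos(-1/3)):
φ¹ = φ² = φ³ = sin(lt), φ⁴ = φ⁵ = φ⁶ = (sin l / (2 sin(l/2))) sin(l/2 - lt)
satisfy (1/l²)(φⁱ)'' + φⁱ = 0 together with all junction and derivative
matching conditions. -/
theorem stmt_19 :
    let l := Real.arccos (-(1/3 : ℝ))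
    let φ₁ : ℝ → ℝ := fun t => Real.sin (l * t)
    let φ₄ : ℝ → ℝ := fun t =>
      (Real.sin l / (2 * Real.sin (l / 2))) * Real.sin (l / 2 - l * t)
    (∀ t : ℝ, (1 / l ^ 2) * deriv (deriv φ₁) t + φ₁ t = 0) ∧
    (∀ t : ℝ, (1 / l ^ 2) * deriv (deriv φ₄) t + φ₄ t = 0) ∧
    (φ₁ 0 + φ₁ 0 + φ₁ 0 = 0) ∧
    (φ₁ 1 - φ₄ 0 + φ₄ 1 = 0) ∧
    (φ₁ 1 - φ₄ 0 + φ₄ 1 = 0) ∧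
    (φ₁ 1 - φ₄ 0 + φ₄ 1 = 0) ∧
    (deriv φ₁ 0 = deriv φ₁ 0 ∧ deriv φ₁ 0 = deriv φ₁ 0) ∧
    (deriv φ₁ 1 = deriv φ₄ 0 ∧ deriv φ₄ 0 = deriv φ₄ 1) ∧
    (deriv φ₁ 1 = deriv φ₄ 0 ∧ deriv φ₄ 0 = deriv φ₄ 1) ∧
    (deriv φ₁ 1 = deriv φ₄ 0 ∧ deriv φ₄ 0 = deriv φ₄ 1) := by
  intro l φ₁ φ₄
  set c : ℝ := Real.sin l / (2 * Real.sin (l / 2)) with hc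
  have hl0 : 0 < l := Real.arccos_pos.mpr (by norm_num)
  have hlpi : l ≤ Real.pi := Real.arccos_le_pi _
  have hcl : Real.cos l = -(1/3) := Real.cos_arccos (by norm_num) (by norm_num)
  have hs2 : 0 < Real.sin (l / 2) :=
    Real.sin_pos_of_pos_of_lt_pi (by linarith) (by linarith [Real.pi_pos])
  have hs2' : Real.sin (l / 2) ≠ 0 := ne_of_gt hs2
  have hsinl : Real.sin l = 2 * Real.sin (l / 2) * Real.cos (l / 2) := by
    have := Real.sin_two_mul (l / 2)
    rw [show 2 * (l / 2) = l by ring] at this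
    linarith
  have hcsq : Real.cos (l / 2) ^ 2 = 1 / 3 := by
    have := Real.cos_sq (l / 2)
    rw [show 2 * (l / 2) = l by ring, hcl] at this; linarith
  have hceq : c = Real.cos (l / 2) := by
    rw [hc, hsinl]; field_simp
  -- derivatives of φ₁
  have d1 : deriv φ₁ = fun t => Real.cos (l * t) * l := by
    funext t; exact (aux_hd_sin l t).deriv
  have d1' : deriv (deriv φ₁) = fun t => -Real.sin (l * t) * l * l := by
    rw [d1]; funext t; exact (aux_hd_cos l t).deriv
  -- derivatives of φ₄
  have d4 : deriv φ₄ = fun t => c * (Real.cos (l / 2 - l * t) * (-l)) := by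
    funext t; exact (aux_hd_sin2 c l t).deriv
  have d4' : deriv (deriv φ₄) = fun t => c * (-Real.sin (l / 2 - l * t) * (-l) * (-l)) := by
    rw [d4]; funext t; exact (aux_hd_cos2 c l t).deriv
  refine ⟨?_, ?_, ?_, ?_, ?_, ?_, ⟨rfl, rfl⟩, ?_, ?_, ?_⟩
  · intro t
    rw [d1']
    have : (1 / l ^ 2) * (-Real.sin (l * t) * l * l) = -Real.sin (l * t) := by
      field_simp
    simp only [φ₁, this]; ring
  · intro t
    rw [d4']
    have : (1 / l ^ 2) * (c * (-Real.sin (l / 2 - l * t) * (-l) * (-l)))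
        = -(c * Real.sin (l / 2 - l * t)) := by
      field_simp
    simp only [φ₄, ← hc, this]; ring
  · simp [φ₁]
  all_goals try
    (show Real.sin (l * 1) - c * Real.sin (l / 2 - l * 0) + c * Real.sin (l / 2 - l * 1) = 0
     rw [show l / 2 - l * 0 = l / 2 by ring, show l / 2 - l * 1 = -(l / 2) by ring,
       Real.sin_neg, mul_one, hsinl, hceq]
     ring)
  all_goals
    (rw [d1, d4]
     constructor
     · show Real.cos (l * 1) * l = c * (Real.cos (l / 2 - l * 0) * (-l))
       rw [show l / 2 - l * 0 = l / 2 by ring, mul_one, hceq]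
       nlinarith [hcsq, hcl]
     · show c * (Real.cos (l / 2 - l * 0) * (-l)) = c * (Real.cos (l / 2 - l * 1) * (-l))
       rw [show l / 2 - l * 0 = l / 2 by ring, show l / 2 - l * 1 = -(l / 2) by ring,
         Real.cos_neg])
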